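/- arXiv:1201.3850 — 5 statements merged into one kernel-verified Lean document; each statement's English description precedes it below -/
import Mathlib

section
/- If Ψ is a Schwartz function on ℝ with ∫Ψ = 0 and ∫ xΨ(x) dx = 0, then there exists a smooth, rapidly decaying function φ such that Ψ̂(ξ) = ξ² φ̂(ξ) for all ξ ∈ ℝ. -/
/-! `Ψ̂(ξ) = ξ² φ̂(ξ)` says `Ψ = -φ'' / (4π²)`, so `φ` is a multiple of a second primitive of `Ψ`.
The primitive vanishing at `-∞` of a Schwartz function `f` with `∫ f = 0` is again Schwartz:
on either side of the origin it is an integral of `f` over a tail, so it decays like the moments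
of `f`. Integration by parts gives `∫ F = -∫ x f(x)` for that primitive `F`, so the hypothesis
`∫ x Ψ = 0` is what lets the construction be repeated a second time. -/

open MeasureTheory FourierTransform
open Set
open scoped ContDiff SchwartzMap

section Primitive

variable {E : Type*} [NormedAddCommGroup E] [NormedSpace ℝ E]

noncomputable def primitiveIic (f : ℝ → E) (x : ℝ) : E := ∫ t in Iic x, f t

theorem hasDerivAt_primitiveIic [CompleteSpace E] {f : ℝ → E} (hc : Continuous f)
    (hi : Integrable f) (x : ℝ) :
    HasDerivAt (primitiveIic f) (f x) x := by
  have heq : primitiveIic f = fun y => primitiveIic f 0 + ∫ t in (0 : ℝ)..y, f t := by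
    funext y
    rw [primitiveIic, primitiveIic, ← intervalIntegral.integral_Iic_sub_Iic hi.integrableOn
      hi.integrableOn, add_sub_cancel]
  rw [heq]
  exact (intervalIntegral.integral_hasDerivAt_right hi.intervalIntegrable
    (hc.stronglyMeasurableAtFilter _ _) hc.continuousAt).const_add _

theorem pow_mul_norm_setIntegral_le {f : ℝ → E} {k : ℕ} (hi : Integrable f)
    (hk : Integrable fun t => ‖t‖ ^ k * ‖f t‖) {s : Set ℝ} (hs : MeasurableSet s) {x : ℝ}
    (hx : ∀ t ∈ s, ‖x‖ ≤ ‖t‖) :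
    ‖x‖ ^ k * ‖∫ t in s, f t‖ ≤ ∫ t, ‖t‖ ^ k * ‖f t‖ :=
  calc ‖x‖ ^ k * ‖∫ t in s, f t‖ ≤ ∫ t in s, ‖x‖ ^ k * ‖f t‖ := by
        rw [integral_const_mul]; gcongr; exact norm_integral_le_integral_norm _
  _ ≤ ∫ t in s, ‖t‖ ^ k * ‖f t‖ := by
        refine setIntegral_mono_on (hi.norm.const_mul _).integrableOn hk.integrableOn hs
          fun t ht => ?_
        gcongr
        exact hx t ht
  _ ≤ ∫ t, ‖t‖ ^ k * ‖f t‖ := setIntegral_le_integral hk (.of_forall fun t => by positivity)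

theorem pow_mul_norm_primitiveIic_le {f : ℝ → E} {k : ℕ} (hi : Integrable f)
    (hk : Integrable fun t => ‖t‖ ^ k * ‖f t‖) (h0 : ∫ t, f t = 0) (x : ℝ) :
    ‖x‖ ^ k * ‖primitiveIic f x‖ ≤ ∫ t, ‖t‖ ^ k * ‖f t‖ := by
  rcases le_or_gt x 0 with hx | hx
  · refine pow_mul_norm_setIntegral_le hi hk measurableSet_Iic fun t ht => ?_
    rw [Real.norm_of_nonpos hx, Real.norm_of_nonpos (le_trans ht hx)]
    exact neg_le_neg ht
  · -- since `∫ f = 0`, the primitive is also minus the integral over `Ioi x`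
    have hIoi : primitiveIic f x = -∫ t in Ioi x, f t := by
      rw [primitiveIic, eq_neg_iff_add_eq_zero, intervalIntegral.integral_Iic_add_Ioi
        hi.integrableOn hi.integrableOn, h0]
    rw [hIoi, norm_neg]
    refine pow_mul_norm_setIntegral_le hi hk measurableSet_Ioi fun t ht => ?_
    rw [Real.norm_of_nonneg hx.le, Real.norm_of_nonneg (hx.trans ht).le]
    exact ht.le

namespace SchwartzMap

theorem exists_hasDerivAt_eq_of_integral_eq_zero [CompleteSpace E] (f : 𝓢(ℝ, E))
    (h0 : ∫ x, f x = 0) :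
    ∃ g : 𝓢(ℝ, E), ∀ x, HasDerivAt g (f x) x := by
  have hg : ∀ x, HasDerivAt (primitiveIic f) (f x) x :=
    hasDerivAt_primitiveIic f.continuous f.integrable
  have hderiv : deriv (primitiveIic f) = f := funext fun x => (hg x).deriv
  have hsmooth : ContDiff ℝ ∞ (primitiveIic f) := by
    rw [contDiff_infty_iff_deriv, hderiv]
    exact ⟨fun x => (hg x).differentiableAt, f.smooth ⊤⟩
  refine ⟨⟨primitiveIic f, hsmooth, fun k n => ?_⟩, hg⟩
  simp_rw [norm_iteratedFDeriv_eq_norm_iteratedDeriv]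
  cases n with
  | zero =>
    exact ⟨_, fun x => by
      simpa using pow_mul_norm_primitiveIic_le f.integrable (f.integrable_pow_mul volume k) h0 x⟩
  | succ n =>
    obtain ⟨C, -, hC⟩ := f.decay k n
    refine ⟨C, fun x => ?_⟩
    rw [iteratedDeriv_succ', hderiv, ← norm_iteratedFDeriv_eq_norm_iteratedDeriv]
    exact hC x

theorem integrable_smul_self (f : 𝓢(ℝ, E)) : Integrable fun x : ℝ => x • f x :=
  (f.integrable_pow_mul volume 1).mono (by fun_prop) (.of_forall fun x => by simp [norm_smul])

theorem integral_eq_neg_integral_smul_of_hasDerivAt {f g : 𝓢(ℝ, E)}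
    (hg : ∀ x, HasDerivAt g (f x) x) : ∫ x, g x = -∫ x, x • f x := by
  have hderiv : ∀ x : ℝ, HasDerivAt (fun y : ℝ => y • g y) (g x + x • f x) x := fun x =>
    ((hasDerivAt_id' x).smul (hg x)).congr_deriv (by rw [one_smul, add_comm])
  have := integral_eq_zero_of_hasDerivAt_of_integrable hderiv
    (g.integrable.add f.integrable_smul_self) g.integrable_smul_self
  rwa [integral_add g.integrable f.integrable_smul_self, add_eq_zero_iff_eq_neg] at this

end SchwartzMap

end Primitive

theorem SchwartzMap.fourier_eq_of_hasDerivAt {E : Type*} [NormedAddCommGroup E] [NormedSpace ℂ E]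
    {f g : 𝓢(ℝ, E)} (hg : ∀ x, HasDerivAt g (f x) x) (ξ : ℝ) :
    𝓕 (⇑f) ξ = (2 * Real.pi * Complex.I * ξ) • 𝓕 (⇑g) ξ := by
  have hderiv : deriv g = f := funext fun x => (hg x).deriv
  rw [← hderiv, Real.fourier_deriv g.integrable g.differentiable (hderiv ▸ f.integrable)]

theorem stmt2 (Ψ : SchwartzMap ℝ ℂ)
    (h0 : ∫ x : ℝ, Ψ x = 0) (h1 : ∫ x : ℝ, (x : ℂ) * Ψ x = 0) :
    ∃ φ : SchwartzMap ℝ ℂ, ∀ ξ : ℝ, 𝓕 (⇑Ψ) ξ = (ξ:ℂ)^2 * 𝓕 (⇑φ) ξ := by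
  obtain ⟨F₁, hF₁⟩ := Ψ.exists_hasDerivAt_eq_of_integral_eq_zero h0
  have hF₁0 : ∫ x, F₁ x = 0 := by
    simpa [SchwartzMap.integral_eq_neg_integral_smul_of_hasDerivAt hF₁, Complex.real_smul] using h1
  obtain ⟨F₂, hF₂⟩ := F₁.exists_hasDerivAt_eq_of_integral_eq_zero hF₁0
  refine ⟨(-4 * Real.pi ^ 2 : ℂ) • F₂, fun ξ => ?_⟩
  rw [← SchwartzMap.fourier_coe ((-4 * Real.pi ^ 2 : ℂ) • F₂), fourier_smul, smul_apply,
    SchwartzMap.fourier_coe, SchwartzMap.fourier_eq_of_hasDerivAt hF₁,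
    SchwartzMap.fourier_eq_of_hasDerivAt hF₂]
  simp only [smul_eq_mul]
  linear_combination (4 * Real.pi ^ 2 * ξ ^ 2 * 𝓕 (⇑F₂) ξ) * Complex.I_sq
end

section
/- Let A : ℝ → ℂ be smooth with A' bounded, and f smooth and compactly supported. Then (H∘A − A∘H)(f')(x) = −H(A'f)(x) + C₁f(x) for all x, where H is the Hilbert transform, A denotes multiplication by A, and C₁f(x) = p.v. ∫ (A(x)−A(y))/(x−y)² · f(y) dy is the first Calderón commutator. -/
open MeasureTheory Filter Topology

/-- `HasPV g L`: the principal value `p.v. ∫ g(t) dt` (limit of integrals over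
`ε < |t| < 1/ε` as `ε → 0⁺`) exists and equals `L`. -/
def HasPV (g : ℝ → ℂ) (L : ℂ) : Prop :=
  Tendsto (fun ε : ℝ => ∫ t in {t : ℝ | ε < |t| ∧ |t| < ε⁻¹}, g t)
    (nhdsWithin 0 (Set.Ioi 0)) (nhds L)

/-- Combined integrand. -/
noncomputable def gfun (A f : ℝ → ℂ) (x t : ℝ) : ℂ :=
  A (x - t) * deriv f (x - t) / t - A x * (deriv f (x - t) / t)
    + deriv A (x - t) * f (x - t) / t - (A x - A (x - t)) / t ^ 2 * f (x - t)

/-- Antiderivative of the combined integrand. -/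
noncomputable def Ffun (A f : ℝ → ℂ) (x t : ℝ) : ℂ :=
  (A x - A (x - t)) * f (x - t) / t

lemma hasDerivAt_Ffun (A f : ℝ → ℂ) (hA : ContDiff ℝ (⊤ : ℕ∞) A) (hf : ContDiff ℝ (⊤ : ℕ∞) f)
    (x t : ℝ) (ht : t ≠ 0) : HasDerivAt (Ffun A f x) (gfun A f x t) t := by
  have htC : (t : ℂ) ≠ 0 := by exact_mod_cast ht
  have hsub : HasDerivAt (fun s : ℝ => x - s) (-1) t := (hasDerivAt_id t).const_sub x
  have hAt : HasDerivAt (fun s : ℝ => A (x - s)) (-deriv A (x - t)) t := by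
    have := ((hA.differentiable (by simp) (x - t)).hasDerivAt).scomp t hsub
    simpa [Function.comp_def] using this
  have hft : HasDerivAt (fun s : ℝ => f (x - s)) (-deriv f (x - t)) t := by
    have := ((hf.differentiable (by simp) (x - t)).hasDerivAt).scomp t hsub
    simpa [Function.comp_def] using this
  have hN : HasDerivAt (fun s : ℝ => (A x - A (x - s)) * f (x - s))
      (deriv A (x - t) * f (x - t) + (A x - A (x - t)) * -deriv f (x - t)) t := by
    have h1 : HasDerivAt (fun s : ℝ => A x - A (x - s)) (deriv A (x - t)) t := by
      simpa using hAt.const_sub (A x)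
    exact h1.mul hft
  have hden : HasDerivAt (fun s : ℝ => (s : ℂ)) 1 t := by
    simpa using (hasDerivAt_id t).ofReal_comp
  have := hN.div hden htC
  refine this.congr_deriv ?_
  simp only [gfun]
  field_simp
  ring

theorem stmt6 (A f : ℝ → ℂ) (hA : ContDiff ℝ (⊤ : ℕ∞) A)
    (hA' : ∃ C : ℝ, ∀ x, ‖deriv A x‖ ≤ C)
    (hf : ContDiff ℝ (⊤ : ℕ∞) f) (hfc : HasCompactSupport f)
    (x : ℝ) (L₁ L₂ L₃ L₄ : ℂ)
    -- `H(A·f')(x)`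
    (h₁ : HasPV (fun y => A (x - y) * deriv f (x - y) / y) L₁)
    -- `H(f')(x)`
    (h₂ : HasPV (fun y => deriv f (x - y) / y) L₂)
    -- `H(A'·f)(x)`
    (h₃ : HasPV (fun y => deriv A (x - y) * f (x - y) / y) L₃)
    -- `C₁f(x) = p.v. ∫ (A(x)-A(y))/(x-y)² f(y) dy`
    (h₄ : HasPV (fun t => (A x - A (x - t)) / t ^ 2 * f (x - t)) L₄) :
    L₁ - A x * L₂ = -L₃ + L₄ := by
  classical
  -- continuity facts
  have hAc : Continuous A := hA.continuous
  have hfcont : Continuous f := hf.continuous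
  have hA'c : Continuous (deriv A) := hA.continuous_deriv (by simp)
  have hf'c : Continuous (deriv f) := hf.continuous_deriv (by simp)
  -- compact support radius
  obtain ⟨R, hR0, hRf⟩ : ∃ R : ℝ, 0 < R ∧ ∀ u : ℝ, R < |u| → f u = 0 := by
    obtain ⟨R, hR⟩ := hfc.isCompact.isBounded.subset_closedBall 0
    refine ⟨max R 1, lt_of_lt_of_le one_pos (le_max_right _ _), fun u hu => ?_⟩
    by_contra h
    have hmem : u ∈ tsupport f := subset_tsupport f (by simpa using h)
    have h2 := hR hmem
    simp only [Metric.mem_closedBall, Real.dist_eq, sub_zero] at h2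
    linarith [le_max_left R 1, hu.le]
  -- notation
  set l := nhdsWithin (0:ℝ) (Set.Ioi 0) with hl
  set S : ℝ → Set ℝ := fun ε => {t : ℝ | ε < |t| ∧ |t| < ε⁻¹} with hSdef
  set i₁ : ℝ → ℂ := fun t => A (x - t) * deriv f (x - t) / t with hi1
  set i₂ : ℝ → ℂ := fun t => deriv f (x - t) / t with hi2
  set i₃ : ℝ → ℂ := fun t => deriv A (x - t) * f (x - t) / t with hi3
  set i₄ : ℝ → ℂ := fun t => (A x - A (x - t)) / t ^ 2 * f (x - t) with hi4
  -- continuity of the integrands away from 0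
  have hcoe : ContinuousOn (fun t : ℝ => (t : ℂ)) {(0:ℝ)}ᶜ :=
    Complex.continuous_ofReal.continuousOn
  have hne : ∀ t : ℝ, t ∈ ({(0:ℝ)}ᶜ : Set ℝ) → (t : ℂ) ≠ 0 := by
    intro t ht
    simp only [Set.mem_compl_iff, Set.mem_singleton_iff] at ht
    exact_mod_cast ht
  have hne2 : ∀ t : ℝ, t ∈ ({(0:ℝ)}ᶜ : Set ℝ) → ((t : ℂ)) ^ 2 ≠ 0 := fun t ht =>
    pow_ne_zero _ (hne t ht)
  have c1 : ContinuousOn i₁ {(0:ℝ)}ᶜ := by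
    apply ContinuousOn.div _ hcoe hne
    exact ((hAc.comp (continuous_const.sub continuous_id)).mul
      (hf'c.comp (continuous_const.sub continuous_id))).continuousOn
  have c2 : ContinuousOn i₂ {(0:ℝ)}ᶜ := by
    apply ContinuousOn.div _ hcoe hne
    exact (hf'c.comp (continuous_const.sub continuous_id)).continuousOn
  have c3 : ContinuousOn i₃ {(0:ℝ)}ᶜ := by
    apply ContinuousOn.div _ hcoe hne
    exact ((hA'c.comp (continuous_const.sub continuous_id)).mul
      (hfcont.comp (continuous_const.sub continuous_id))).continuousOn
  have c4 : ContinuousOn i₄ {(0:ℝ)}ᶜ := by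
    apply ContinuousOn.mul
    · apply ContinuousOn.div _ (hcoe.pow 2) hne2
      exact (continuous_const.sub (hAc.comp (continuous_const.sub continuous_id))).continuousOn
    · exact (hfcont.comp (continuous_const.sub continuous_id)).continuousOn
  have cg : ContinuousOn (gfun A f x) {(0:ℝ)}ᶜ := by
    have : gfun A f x = fun t => i₁ t - A x * i₂ t + i₃ t - i₄ t := rfl
    rw [this]
    exact ((c1.sub ((continuous_const.continuousOn).mul c2)).add c3).sub c4
  -- description of the domain
  have hS : ∀ ε : ℝ, 0 < ε → ε < 1 →
      S ε = Set.Ioo (-ε⁻¹) (-ε) ∪ Set.Ioo ε ε⁻¹ := by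
    intro ε hε0 hε1
    have hεinv : (0:ℝ) < ε⁻¹ := by positivity
    ext t
    simp only [hSdef, Set.mem_setOf_eq, Set.mem_union, Set.mem_Ioo]
    rcases lt_trichotomy t 0 with h | h | h
    · rw [abs_of_neg h]
      constructor
      · rintro ⟨h1, h2⟩; exact Or.inl ⟨by linarith, by linarith⟩
      · rintro (⟨h1, h2⟩ | ⟨h1, h2⟩)
        · exact ⟨by linarith, by linarith⟩
        · linarith
    · subst h
      simp only [abs_zero]
      constructor
      · rintro ⟨h1, h2⟩; linarith
      · rintro (⟨h1, h2⟩ | ⟨h1, h2⟩) <;> linarith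
    · rw [abs_of_pos h]
      constructor
      · rintro ⟨h1, h2⟩; exact Or.inr ⟨h1, h2⟩
      · rintro (⟨h1, h2⟩ | ⟨h1, h2⟩)
        · linarith
        · exact ⟨h1, h2⟩
  -- good ε's
  have hcpos : (0:ℝ) < min 1 (R + |x| + 1)⁻¹ := by positivity
  have hev : ∀ᶠ ε in l, ε ∈ Set.Ioo (0:ℝ) (min 1 (R + |x| + 1)⁻¹) :=
    Ioo_mem_nhdsGT_of_mem ⟨le_refl 0, hcpos⟩
  -- subsets avoiding 0
  have hsub_pos : ∀ ε : ℝ, 0 < ε → (Set.Icc ε ε⁻¹ : Set ℝ) ⊆ {(0:ℝ)}ᶜ := by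
    intro ε hε0 t ht
    simp only [Set.mem_Icc] at ht
    simp only [Set.mem_compl_iff, Set.mem_singleton_iff]
    intro h; rw [h] at ht; linarith [ht.1]
  have hsub_neg : ∀ ε : ℝ, 0 < ε → (Set.Icc (-ε⁻¹) (-ε) : Set ℝ) ⊆ {(0:ℝ)}ᶜ := by
    intro ε hε0 t ht
    simp only [Set.mem_Icc] at ht
    simp only [Set.mem_compl_iff, Set.mem_singleton_iff]
    intro h; rw [h] at ht; linarith [ht.2]
  have hintS : ∀ (j : ℝ → ℂ), ContinuousOn j {(0:ℝ)}ᶜ →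
      ∀ ε : ℝ, 0 < ε → ε < 1 → IntegrableOn j (S ε) := by
    intro j hj ε hε0 hε1
    rw [hS ε hε0 hε1]
    refine IntegrableOn.union ?_ ?_
    · exact ((hj.mono (hsub_neg ε hε0)).integrableOn_Icc).mono_set Set.Ioo_subset_Icc_self
    · exact ((hj.mono (hsub_pos ε hε0)).integrableOn_Icc).mono_set Set.Ioo_subset_Icc_self
  -- Step 1: the combined integral splits
  have E1 : ∀ᶠ ε in l, ∫ t in S ε, gfun A f x t =
      (∫ t in S ε, i₁ t) - A x * (∫ t in S ε, i₂ t) + (∫ t in S ε, i₃ t)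
        - ∫ t in S ε, i₄ t := by
    filter_upwards [hev] with ε hε
    obtain ⟨hε0, hεc⟩ := hε
    have hε1 : ε < 1 := lt_of_lt_of_le hεc (min_le_left _ _)
    have int1 := hintS i₁ c1 ε hε0 hε1
    have int2 := hintS i₂ c2 ε hε0 hε1
    have int3 := hintS i₃ c3 ε hε0 hε1
    have int4 := hintS i₄ c4 ε hε0 hε1
    have J2 : IntegrableOn (fun t => A x * i₂ t) (S ε) volume := int2.const_mul (A x)
    have J12 : IntegrableOn (fun t => i₁ t - A x * i₂ t) (S ε) volume := int1.sub J2
    have J123 : IntegrableOn (fun t => i₁ t - A x * i₂ t + i₃ t) (S ε) volume := J12.add int3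
    have hgg : ∫ t in S ε, gfun A f x t
        = ∫ t in S ε, (i₁ t - A x * i₂ t + i₃ t - i₄ t) := rfl
    rw [hgg, integral_sub J123 int4, integral_add J12 int3, integral_sub int1 J2,
      integral_const_mul]
  -- Step 2: FTC on each of the two intervals
  have E2 : ∀ᶠ ε in l, ∫ t in S ε, gfun A f x t =
      (Ffun A f x ε⁻¹ - Ffun A f x ε) + (Ffun A f x (-ε) - Ffun A f x (-ε⁻¹)) := by
    filter_upwards [hev] with ε hε
    obtain ⟨hε0, hεc⟩ := hε
    have hε1 : ε < 1 := lt_of_lt_of_le hεc (min_le_left _ _)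
    have hεinv : (0:ℝ) < ε⁻¹ := by positivity
    have h1inv : 1 < ε⁻¹ := by
      rw [lt_inv_comm₀ one_pos hε0, inv_one]; exact hε1
    have hεlt : ε < ε⁻¹ := lt_trans hε1 h1inv
    have hnlt : -ε⁻¹ < -ε := neg_lt_neg hεlt
    have hdisj : Disjoint (Set.Ioo (-ε⁻¹) (-ε)) (Set.Ioo ε ε⁻¹) := by
      rw [Set.disjoint_left]
      rintro t ⟨_, h2⟩ ⟨h3, _⟩
      linarith
    have intgneg : IntegrableOn (gfun A f x) (Set.Ioo (-ε⁻¹) (-ε)) :=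
      ((cg.mono (hsub_neg ε hε0)).integrableOn_Icc).mono_set Set.Ioo_subset_Icc_self
    have intgpos : IntegrableOn (gfun A f x) (Set.Ioo ε ε⁻¹) :=
      ((cg.mono (hsub_pos ε hε0)).integrableOn_Icc).mono_set Set.Ioo_subset_Icc_self
    rw [hS ε hε0 hε1, setIntegral_union hdisj measurableSet_Ioo intgneg intgpos]
    have hpos : ∫ t in Set.Ioo ε ε⁻¹, gfun A f x t = Ffun A f x ε⁻¹ - Ffun A f x ε := by
      rw [← integral_Ioc_eq_integral_Ioo, ← intervalIntegral.integral_of_le hεlt.le]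
      apply intervalIntegral.integral_eq_sub_of_hasDerivAt
      · intro t ht
        rw [Set.uIcc_of_le hεlt.le] at ht
        refine hasDerivAt_Ffun A f hA hf x t ?_
        exact Set.mem_compl_singleton_iff.mp (hsub_pos ε hε0 ht)
      · apply ContinuousOn.intervalIntegrable
        apply cg.mono
        rw [Set.uIcc_of_le hεlt.le]
        exact hsub_pos ε hε0
    have hneg : ∫ t in Set.Ioo (-ε⁻¹) (-ε), gfun A f x t
        = Ffun A f x (-ε) - Ffun A f x (-ε⁻¹) := by
      rw [← integral_Ioc_eq_integral_Ioo, ← intervalIntegral.integral_of_le hnlt.le]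
      apply intervalIntegral.integral_eq_sub_of_hasDerivAt
      · intro t ht
        rw [Set.uIcc_of_le hnlt.le] at ht
        refine hasDerivAt_Ffun A f hA hf x t ?_
        exact Set.mem_compl_singleton_iff.mp (hsub_neg ε hε0 ht)
      · apply ContinuousOn.intervalIntegrable
        apply cg.mono
        rw [Set.uIcc_of_le hnlt.le]
        exact hsub_neg ε hε0
    rw [hpos, hneg]
    ring
  -- the combined integral tends to the combination of the limits
  have hcombo : Tendsto (fun ε => (∫ t in S ε, i₁ t) - A x * (∫ t in S ε, i₂ t)
      + (∫ t in S ε, i₃ t) - ∫ t in S ε, i₄ t) l (𝓝 (L₁ - A x * L₂ + L₃ - L₄)) := by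
    have t1 : Tendsto (fun ε => ∫ t in S ε, i₁ t) l (𝓝 L₁) := h₁
    have t2 : Tendsto (fun ε => ∫ t in S ε, i₂ t) l (𝓝 L₂) := h₂
    have t3 : Tendsto (fun ε => ∫ t in S ε, i₃ t) l (𝓝 L₃) := h₃
    have t4 : Tendsto (fun ε => ∫ t in S ε, i₄ t) l (𝓝 L₄) := h₄
    exact ((t1.sub (t2.const_mul (A x))).add t3).sub t4
  have T1 : Tendsto (fun ε => ∫ t in S ε, gfun A f x t) l (𝓝 (L₁ - A x * L₂ + L₃ - L₄)) :=
    Tendsto.congr' (EventuallyEq.symm E1) hcombo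
  -- the boundary terms tend to 0
  have hA0 : HasDerivAt (fun t : ℝ => A (x - t)) (-deriv A x) 0 := by
    have h1 : HasDerivAt (fun s : ℝ => x - s) (-1) (0:ℝ) := (hasDerivAt_id 0).const_sub x
    have h2 : HasDerivAt A (deriv A (x - 0)) (x - 0) :=
      (hA.differentiable (by simp) (x - 0)).hasDerivAt
    have := h2.scomp (0:ℝ) h1
    simpa [Function.comp_def] using this
  have hslope := hasDerivAt_iff_tendsto_slope.mp hA0
  have hfx : Tendsto (fun t : ℝ => f (x - t)) (nhdsWithin (0:ℝ) {(0:ℝ)}ᶜ) (𝓝 (f x)) := by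
    have h0 : Tendsto (fun t : ℝ => f (x - t)) (𝓝 (0:ℝ)) (𝓝 (f (x - 0))) :=
      ((hfcont.comp (continuous_const.sub continuous_id)).tendsto 0)
    simpa using h0.mono_left nhdsWithin_le_nhds
  have hFl : Tendsto (Ffun A f x) (nhdsWithin (0:ℝ) {(0:ℝ)}ᶜ) (𝓝 (deriv A x * f x)) := by
    have hmul := (hslope.neg).mul hfx
    have heq : (fun t : ℝ => -(slope (fun s : ℝ => A (x - s)) 0 t) * f (x - t))
        = Ffun A f x := by
      funext t
      simp only [slope, Ffun, vsub_eq_sub, sub_zero]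
      rw [Complex.real_smul, Complex.ofReal_inv]
      ring
    rw [heq] at hmul
    simpa using hmul
  have hle : l ≤ nhdsWithin (0:ℝ) {(0:ℝ)}ᶜ :=
    nhdsWithin_mono 0 (fun t ht => Set.mem_compl_singleton_iff.mpr (ne_of_gt ht))
  have hposT : Tendsto (fun ε : ℝ => Ffun A f x ε) l (𝓝 (deriv A x * f x)) :=
    hFl.mono_left hle
  have hnegt : Tendsto (fun ε : ℝ => -ε) l (nhdsWithin (0:ℝ) {(0:ℝ)}ᶜ) := by
    apply tendsto_nhdsWithin_of_tendsto_nhds_of_eventually_within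
    · simpa using (continuous_neg.tendsto (0:ℝ)).mono_left nhdsWithin_le_nhds
    · filter_upwards [self_mem_nhdsWithin] with ε hε
      exact Set.mem_compl_singleton_iff.mpr (neg_ne_zero.mpr (ne_of_gt hε))
  have hnegT : Tendsto (fun ε : ℝ => Ffun A f x (-ε)) l (𝓝 (deriv A x * f x)) :=
    hFl.comp hnegt
  have hmid : Tendsto (fun ε : ℝ => Ffun A f x (-ε) - Ffun A f x ε) l (𝓝 0) := by
    simpa using hnegT.sub hposT
  have hzero : ∀ᶠ ε in l, Ffun A f x ε⁻¹ = 0 ∧ Ffun A f x (-ε⁻¹) = 0 := by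
    filter_upwards [hev] with ε hε
    obtain ⟨hε0, hεc⟩ := hε
    have hRpos : (0:ℝ) < R + |x| + 1 := by positivity
    have hεR : ε < (R + |x| + 1)⁻¹ := lt_of_lt_of_le hεc (min_le_right _ _)
    have hinv : R + |x| + 1 < ε⁻¹ := (lt_inv_comm₀ hε0 hRpos).mp hεR
    constructor
    · have hz : f (x - ε⁻¹) = 0 := by
        apply hRf
        rw [abs_sub_comm]
        have h1 := le_abs_self (ε⁻¹ - x)
        have h2 := le_abs_self x
        linarith
      simp [Ffun, hz]
    · have hz : f (x + ε⁻¹) = 0 := by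
        apply hRf
        have h1 := le_abs_self (x + ε⁻¹)
        have h2 := neg_abs_le x
        linarith
      simp [Ffun, sub_neg_eq_add, hz]
  have T2 : Tendsto (fun ε => ∫ t in S ε, gfun A f x t) l (𝓝 0) := by
    refine Tendsto.congr' ?_ hmid
    filter_upwards [E2, hzero] with ε hE hz
    rw [hE, hz.1, hz.2]
    ring
  have hun := tendsto_nhds_unique T1 T2
  linear_combination hun
end

section
/- Let A : ℝ → ℂ be smooth and compactly supported. Then for each x, p.v. ∫_ℝ (A(x+t) − A(x))/t² dt = H(A')(x), where H is the Hilbert transform. -/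
open MeasureTheory Filter

open Set intervalIntegral Topology in
theorem stmt7 (A : ℝ → ℂ) (hA : ContDiff ℝ (⊤ : ℕ∞) A) (hAc : HasCompactSupport A)
    (x : ℝ) :
    ∃ L : ℂ, HasPV (fun t => (A (x + t) - A x) / t ^ 2) L ∧
      HasPV (fun t => deriv A (x + t) / t) L := by
  have hA2 : ContDiff ℝ ((⊤:ℕ∞) : WithTop ℕ∞) A := hA.of_le (by simp)
  obtain ⟨hAd, hA'⟩ := contDiff_infty_iff_deriv.mp hA2
  have hA'c : HasCompactSupport (deriv A) := hAc.deriv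
  have hcA' : Continuous (deriv A) := hA'.continuous
  obtain ⟨C, hC⟩ := ContDiff.lipschitzWith_of_hasCompactSupport hA'c hA' (by simp)
  -- radius outside which deriv A and A vanish
  obtain ⟨R, hR⟩ : ∃ R : ℝ, 0 < R ∧ ∀ y : ℝ, R ≤ |y| → A y = 0 ∧ deriv A y = 0 := by
    obtain ⟨R, hR⟩ := (hAc.union hA'c).isBounded.subset_closedBall 0
    refine ⟨|R| + 1, by positivity, fun y hy => ?_⟩
    have hy' : y ∉ tsupport A ∪ tsupport (deriv A) := by
      intro h
      have h2 := hR h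
      rw [Metric.mem_closedBall, Real.dist_eq, sub_zero] at h2
      have : |R| + 1 ≤ |y| := hy
      have : R ≤ |R| := le_abs_self R
      linarith
    exact ⟨image_eq_zero_of_notMem_tsupport (fun h => hy' (Or.inl h)),
           image_eq_zero_of_notMem_tsupport (fun h => hy' (Or.inr h))⟩
  set f : ℝ → ℂ := fun t => (A (x + t) - A x) / (t : ℂ) ^ 2 with hf
  set g : ℝ → ℂ := fun t => deriv A (x + t) / (t : ℂ) with hg
  set G : ℝ → ℂ := fun t => (deriv A (x + t) - deriv A (x - t)) / (t : ℂ) with hG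
  set S : ℝ → Set ℝ := fun ε => {t : ℝ | ε < |t| ∧ |t| < ε⁻¹} with hS
  -- continuity away from 0
  have hfc : ContinuousOn f {t : ℝ | t ≠ 0} := by
    apply ContinuousOn.div
    · exact (((hA.continuous).comp (continuous_const.add continuous_id)).sub
        continuous_const).continuousOn
    · exact (Complex.continuous_ofReal.pow 2).continuousOn
    · intro t ht
      simpa using pow_ne_zero 2 (Complex.ofReal_ne_zero.mpr ht)
  have hgc : ContinuousOn g {t : ℝ | t ≠ 0} := by
    apply ContinuousOn.div
    · exact (hcA'.comp (continuous_const.add continuous_id)).continuousOn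
    · exact Complex.continuous_ofReal.continuousOn
    · exact fun t ht => Complex.ofReal_ne_zero.mpr ht
  have hGc : ContinuousOn G {t : ℝ | t ≠ 0} := by
    apply ContinuousOn.div
    · exact ((hcA'.comp (continuous_const.add continuous_id)).sub
        (hcA'.comp (continuous_const.sub continuous_id))).continuousOn
    · exact Complex.continuous_ofReal.continuousOn
    · exact fun t ht => Complex.ofReal_ne_zero.mpr ht
  -- bound on G
  have hGbdd : ∀ t : ℝ, ‖G t‖ ≤ 2 * C := by
    intro t
    rcases eq_or_ne t 0 with rfl | ht
    · simp only [hG, Complex.ofReal_zero, div_zero, norm_zero]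
      positivity
    · have h1 : ‖deriv A (x + t) - deriv A (x - t)‖ ≤ C * (2 * |t|) := by
        have := hC.dist_le_mul (x + t) (x - t)
        rw [Complex.dist_eq, Real.dist_eq] at this
        have h2 : |x + t - (x - t)| = 2 * |t| := by
          rw [show x + t - (x - t) = 2 * t by ring, abs_mul]
          norm_num
        rw [h2] at this
        exact this
      have h3 : ‖G t‖ = ‖deriv A (x + t) - deriv A (x - t)‖ / |t| := by
        rw [hG]
        simp [norm_div, Complex.norm_real, Real.norm_eq_abs]
      rw [h3]
      rw [div_le_iff₀ (abs_pos.mpr ht)]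
      calc ‖deriv A (x + t) - deriv A (x - t)‖ ≤ C * (2 * |t|) := h1
        _ = 2 * C * |t| := by ring
  -- G vanishes far away
  set R' : ℝ := R + |x| with hR'
  have hGzero : ∀ t : ℝ, R' < t → G t = 0 := by
    intro t ht
    have hx1 := neg_abs_le x
    have hx2 := le_abs_self x
    have h1 : R ≤ |x + t| := by
      have : R < x + t := by rw [hR'] at ht; linarith
      exact this.le.trans (le_abs_self _)
    have h2 : R ≤ |x - t| := by
      have : R < t - x := by rw [hR'] at ht; linarith
      calc R ≤ t - x := this.le
        _ ≤ |t - x| := le_abs_self _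
        _ = |x - t| := abs_sub_comm _ _
    rw [hG]
    simp [(hR.2 _ h1).2, (hR.2 _ h2).2]
  -- G is measurable and integrable on (0, ∞)
  have hGm : Measurable G := by
    apply Measurable.div
    · exact ((hcA'.comp (continuous_const.add continuous_id)).sub
        (hcA'.comp (continuous_const.sub continuous_id))).measurable
    · exact Complex.measurable_ofReal
  have hR'pos : 0 < R' := by
    have := abs_nonneg x
    rw [hR']; linarith [hR.1]
  have hGint : IntegrableOn G (Ioi (0:ℝ)) := by
    have h1 : IntegrableOn G (Ioc 0 R') := by
      exact Measure.integrableOn_of_bounded measure_Ioc_lt_top.ne hGm.aestronglyMeasurable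
        (ae_of_all _ fun t => hGbdd t)
    have h2 : IntegrableOn G (Ioi R') :=
      (integrableOn_congr_fun (fun t ht => hGzero t ht) measurableSet_Ioi).mpr
        (integrableOn_zero)
    have h3 := h1.union h2
    rwa [Ioc_union_Ioi_eq_Ioi hR'pos.le] at h3
  set L : ℂ := ∫ t in Ioi (0:ℝ), G t with hL
  have hmem : ∀ᶠ ε in 𝓝[>] (0:ℝ), ε ∈ Ioo (0:ℝ) 1 :=
    Ioo_mem_nhdsGT_of_mem ⟨le_rfl, one_pos⟩
  have hpos : ∀ᶠ ε in 𝓝[>] (0:ℝ), (0:ℝ) < ε := self_mem_nhdsWithin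
  -- limit of ∫_{Ioc ε ε⁻¹} G
  have hg_lim : Tendsto (fun ε : ℝ => ∫ t in Ioc ε ε⁻¹, G t) (𝓝[>] (0:ℝ)) (𝓝 L) := by
    have hdct := tendsto_integral_filter_of_dominated_convergence
      (μ := volume.restrict (Ioi (0:ℝ))) (l := 𝓝[>] (0:ℝ))
      (F := fun ε (t : ℝ) => (Ioc ε ε⁻¹).indicator G t) (f := G) (bound := fun t => ‖G t‖)
      (Eventually.of_forall fun ε =>
        (hGm.indicator measurableSet_Ioc).aestronglyMeasurable)
      (Eventually.of_forall fun ε =>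
        (ae_of_all _ fun t => norm_indicator_le_norm_self G t))
      hGint.norm ?_
    · refine hdct.congr' ?_
      filter_upwards [hpos] with ε hε
      rw [MeasureTheory.integral_indicator measurableSet_Ioc,
        Measure.restrict_restrict measurableSet_Ioc]
      have hss : Ioc ε ε⁻¹ ∩ Ioi (0:ℝ) = Ioc ε ε⁻¹ :=
        inter_eq_left.mpr (fun t ht => lt_trans hε ht.1)
      rw [hss]
    · refine (ae_restrict_iff' measurableSet_Ioi).mpr (ae_of_all _ fun t (ht : t ∈ Ioi (0:ℝ)) => ?_)
      have ht' : (0:ℝ) < t := ht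
      have h1 : ∀ᶠ ε in 𝓝[>] (0:ℝ), ε < t := by
        filter_upwards [Ioo_mem_nhdsGT_of_mem (Set.mem_Ico.mpr ⟨le_rfl, ht'⟩)] with ε hε
        exact hε.2
      have h2 : ∀ᶠ ε in 𝓝[>] (0:ℝ), t ≤ ε⁻¹ := by
        filter_upwards [Ioo_mem_nhdsGT_of_mem
          (Set.mem_Ico.mpr ⟨le_rfl, inv_pos.mpr ht'⟩), hpos] with ε hε hε0
        have h3 : ε⁻¹ > (t⁻¹)⁻¹ := by
          rw [gt_iff_lt, inv_lt_inv₀ (inv_pos.mpr ht') hε0]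
          exact hε.2
        rw [inv_inv] at h3
        exact h3.le
      refine tendsto_const_nhds.congr' ?_
      filter_upwards [h1, h2] with ε hε1 hε2
      exact (indicator_of_mem (Set.mem_Ioc.mpr ⟨hε1, hε2⟩) G).symm
  -- splitting the symmetric region into two intervals
  have hSsplit : ∀ h : ℝ → ℂ, ContinuousOn h {t : ℝ | t ≠ 0} → ∀ ε : ℝ, ε ∈ Ioo (0:ℝ) 1 →
      ∫ t in S ε, h t = (∫ t in (-ε⁻¹)..(-ε), h t) + ∫ t in ε..ε⁻¹, h t := by
    intro h hc ε hε
    have hε0 : 0 < ε := hε.1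
    have hεinv : 1 < ε⁻¹ := (one_lt_inv₀ hε0).mpr hε.2
    have hεε : ε < ε⁻¹ := lt_trans hε.2 hεinv
    have hset : S ε = Ioo (-ε⁻¹) (-ε) ∪ Ioo ε ε⁻¹ := by
      ext t
      simp only [hS, mem_setOf_eq, mem_union, mem_Ioo]
      constructor
      · rintro ⟨h1, h2⟩
        rcases lt_or_ge t 0 with htn | htp
        · left; rw [abs_of_neg htn] at h1 h2; constructor <;> linarith
        · right; rw [abs_of_nonneg htp] at h1 h2; exact ⟨h1, h2⟩
      · rintro (⟨h1, h2⟩ | ⟨h1, h2⟩)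
        · rw [abs_of_neg (by linarith : t < 0)]; constructor <;> linarith
        · rw [abs_of_nonneg (by linarith : (0:ℝ) ≤ t)]; exact ⟨h1, h2⟩
    have hi1 : IntegrableOn h (Ioo (-ε⁻¹) (-ε)) := by
      have : Icc (-ε⁻¹) (-ε) ⊆ {t : ℝ | t ≠ 0} := fun t ht => by
        have := ht.2; intro h0; rw [h0] at this; linarith
      exact ((hc.mono this).integrableOn_Icc).mono_set Ioo_subset_Icc_self
    have hi2 : IntegrableOn h (Ioo ε ε⁻¹) := by
      have : Icc ε ε⁻¹ ⊆ {t : ℝ | t ≠ 0} := fun t ht => by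
        have := ht.1; intro h0; rw [h0] at this; linarith
      exact ((hc.mono this).integrableOn_Icc).mono_set Ioo_subset_Icc_self
    have hdisj : Disjoint (Ioo (-ε⁻¹) (-ε)) (Ioo ε ε⁻¹) := by
      rw [Set.disjoint_left]
      rintro t ⟨_, h2⟩ ⟨h3, _⟩
      linarith
    rw [hset, setIntegral_union hdisj measurableSet_Ioo hi1 hi2,
      intervalIntegral.integral_of_le (by linarith : -ε⁻¹ ≤ -ε),
      intervalIntegral.integral_of_le hεε.le,
      integral_Ioc_eq_integral_Ioo, integral_Ioc_eq_integral_Ioo]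
  -- g side: symmetric sum gives G
  have hgG : ∀ ε : ℝ, ε ∈ Ioo (0:ℝ) 1 → ∫ t in S ε, g t = ∫ t in Ioc ε ε⁻¹, G t := by
    intro ε hε
    have hε0 : 0 < ε := hε.1
    have hεinv : 1 < ε⁻¹ := (one_lt_inv₀ hε0).mpr hε.2
    have hεε : ε < ε⁻¹ := lt_trans hε.2 hεinv
    have hIccsub : Icc ε ε⁻¹ ⊆ {t : ℝ | t ≠ 0} := fun t ht => by
      have := ht.1; intro h0; rw [h0] at this; exact absurd this (by linarith)
    have hint2 : IntervalIntegrable g volume ε ε⁻¹ := by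
      apply ContinuousOn.intervalIntegrable
      rw [uIcc_of_le hεε.le]
      exact hgc.mono hIccsub
    have hint1 : IntervalIntegrable (fun t => g (-t)) volume ε ε⁻¹ := by
      apply ContinuousOn.intervalIntegrable
      rw [uIcc_of_le hεε.le]
      exact hgc.comp continuous_neg.continuousOn (fun t ht => by
        have := hIccsub ht; simp only [mem_setOf_eq] at this ⊢; intro h0
        exact this (by linarith [neg_eq_zero.mp h0]))
    have h1 : (∫ t in (-ε⁻¹)..(-ε), g t) = ∫ t in ε..ε⁻¹, g (-t) := by
      rw [intervalIntegral.integral_comp_neg]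
    rw [hSsplit g hgc ε hε, h1, ← intervalIntegral.integral_add hint1 hint2]
    rw [show (∫ t in ε..ε⁻¹, (g (-t) + g t)) = ∫ t in ε..ε⁻¹, G t from
      intervalIntegral.integral_congr (fun t ht => ?_),
      intervalIntegral.integral_of_le hεε.le]
    rw [uIcc_of_le hεε.le] at ht
    have ht0 : t ≠ 0 := hIccsub ht
    have htC : (t : ℂ) ≠ 0 := Complex.ofReal_ne_zero.mpr ht0
    simp only [hg, hG]
    rw [show x + -t = x - t by ring]
    push_cast
    field_simp
    ring
  -- integration by parts on an interval avoiding 0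
  have hIBP : ∀ a b : ℝ, (0:ℝ) ∉ uIcc a b →
      ∫ t in a..b, f t = (∫ t in a..b, g t)
        + (((A x - A (x + b)) / (b : ℂ)) - ((A x - A (x + a)) / (a : ℂ))) := by
    intro a b hab
    have hne : ∀ t ∈ uIcc a b, t ≠ 0 := fun t ht h0 => hab (h0 ▸ ht)
    set u : ℝ → ℂ := fun t => A (x + t) - A x with hu_def
    set v : ℝ → ℂ := fun t => -((t : ℂ))⁻¹ with hv_def
    have hu : ∀ t ∈ uIcc a b, HasDerivAt u (deriv A (x + t)) t := by
      intro t _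
      have h1 : HasDerivAt A (deriv A (x + t)) (x + t) := (hAd (x + t)).hasDerivAt
      have h3 := h1.comp_const_add x t
      simpa [hu_def] using h3.sub_const (A x)
    have hveq : v = fun t : ℝ => -(((t⁻¹ : ℝ) : ℂ)) := by
      funext t; simp [hv_def]
    have hv : ∀ t ∈ uIcc a b, HasDerivAt v ((((t ^ 2)⁻¹ : ℝ)) : ℂ) t := by
      intro t ht
      rw [hveq]
      have := ((hasDerivAt_inv (hne t ht)).ofReal_comp).neg
      simp at this ⊢
      exact this
    have hu'c : Continuous (fun t : ℝ => deriv A (x + t)) :=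
      hcA'.comp (continuous_const.add continuous_id)
    have hv'c : ContinuousOn (fun t : ℝ => ((((t ^ 2)⁻¹ : ℝ)) : ℂ)) (uIcc a b) := by
      apply Complex.continuous_ofReal.comp_continuousOn
      exact ContinuousOn.inv₀ (continuous_pow 2).continuousOn
        (fun t ht => pow_ne_zero 2 (hne t ht))
    have hmain := intervalIntegral.integral_deriv_mul_eq_sub hu hv
      (hu'c.intervalIntegrable a b) hv'c.intervalIntegrable
    have hvcont : ContinuousOn v (uIcc a b) := by
      rw [hv_def]
      exact (Complex.continuous_ofReal.continuousOn.inv₀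
        (fun t ht => Complex.ofReal_ne_zero.mpr (hne t ht))).neg
    have huc : Continuous u := by
      rw [hu_def]
      exact (hA.continuous.comp (continuous_const.add continuous_id)).sub continuous_const
    have hint1 : IntervalIntegrable (fun t => deriv A (x + t) * v t) volume a b :=
      (hu'c.continuousOn.mul hvcont).intervalIntegrable
    have hint2 : IntervalIntegrable (fun t => u t * ((((t ^ 2)⁻¹ : ℝ)) : ℂ)) volume a b :=
      (huc.continuousOn.mul hv'c).intervalIntegrable
    rw [intervalIntegral.integral_add hint1 hint2] at hmain
    have hp : ∫ t in a..b, deriv A (x + t) * v t = -∫ t in a..b, g t := by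
      rw [← intervalIntegral.integral_neg]
      apply intervalIntegral.integral_congr
      intro t _
      simp only [hv_def, hg]
      rw [div_eq_mul_inv]
      ring
    have hq : ∫ t in a..b, u t * ((((t ^ 2)⁻¹ : ℝ)) : ℂ) = ∫ t in a..b, f t := by
      apply intervalIntegral.integral_congr
      intro t _
      simp only [hu_def, hf]
      push_cast
      rw [div_eq_mul_inv]
    rw [hp, hq] at hmain
    have hub : u b * v b = (A x - A (x + b)) / (b : ℂ) := by
      simp only [hu_def, hv_def]
      rw [div_eq_mul_inv]
      ring
    have hua : u a * v a = (A x - A (x + a)) / (a : ℂ) := by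
      simp only [hu_def, hv_def]
      rw [div_eq_mul_inv]
      ring
    rw [hub, hua] at hmain
    linear_combination hmain
  -- boundary term and its limit
  set B : ℝ → ℂ := fun ε =>
    (((A x - A (x + -ε)) / ((-ε : ℝ) : ℂ)) - ((A x - A (x + -ε⁻¹)) / ((-ε⁻¹ : ℝ) : ℂ)))
      + (((A x - A (x + ε⁻¹)) / ((ε⁻¹ : ℝ) : ℂ)) - ((A x - A (x + ε)) / ((ε : ℝ) : ℂ)))
    with hBdef
  have hfg : ∀ ε : ℝ, ε ∈ Ioo (0:ℝ) 1 → ∫ t in S ε, f t = (∫ t in S ε, g t) + B ε := by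
    intro ε hε
    have hε0 : 0 < ε := hε.1
    have hεinv : 1 < ε⁻¹ := (one_lt_inv₀ hε0).mpr hε.2
    have hεε : ε < ε⁻¹ := lt_trans hε.2 hεinv
    have h01 : (0:ℝ) ∉ uIcc (-ε⁻¹) (-ε) := by
      rw [uIcc_of_le (by linarith : -ε⁻¹ ≤ -ε)]
      rintro ⟨-, h2⟩; linarith
    have h02 : (0:ℝ) ∉ uIcc ε ε⁻¹ := by
      rw [uIcc_of_le hεε.le]
      rintro ⟨h1, -⟩; linarith
    rw [hSsplit f hfc ε hε, hSsplit g hgc ε hε, hIBP (-ε⁻¹) (-ε) h01, hIBP ε ε⁻¹ h02, hBdef]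
    ring
  have hB0 : Tendsto B (𝓝[>] (0:ℝ)) (𝓝 0) := by
    have hslope : Tendsto (slope A x) (𝓝[≠] x) (𝓝 (deriv A x)) :=
      hasDerivAt_iff_tendsto_slope.mp (hAd x).hasDerivAt
    have hplus : Tendsto (fun ε : ℝ => (A x - A (x + ε)) / ((ε : ℝ) : ℂ)) (𝓝[>] (0:ℝ))
        (𝓝 (-(deriv A x))) := by
      have hmap : Tendsto (fun ε : ℝ => x + ε) (𝓝[>] (0:ℝ)) (𝓝[≠] x) := by
        rw [tendsto_nhdsWithin_iff]
        constructor
        · have hcont : Tendsto (fun ε : ℝ => x + ε) (𝓝 0) (𝓝 (x + 0)) :=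
            (continuous_const.add continuous_id).tendsto 0
          rw [add_zero] at hcont
          exact hcont.mono_left nhdsWithin_le_nhds
        · filter_upwards [hpos] with ε hε
          simp only [mem_compl_iff, mem_singleton_iff]
          intro h; nlinarith [add_right_cancel (a := x) (b := ε) (c := 0)]
      have h2 := (hslope.comp hmap).neg
      refine h2.congr' ?_
      filter_upwards [hpos] with ε hε
      simp only [Function.comp_apply, slope, vsub_eq_sub, add_sub_cancel_left,
        Complex.real_smul, Complex.ofReal_inv]
      rw [div_eq_mul_inv]
      ring
    have hminus : Tendsto (fun ε : ℝ => (A x - A (x + -ε)) / ((-ε : ℝ) : ℂ)) (𝓝[>] (0:ℝ))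
        (𝓝 (-(deriv A x))) := by
      have hmap : Tendsto (fun ε : ℝ => x + -ε) (𝓝[>] (0:ℝ)) (𝓝[≠] x) := by
        rw [tendsto_nhdsWithin_iff]
        constructor
        · have hcont : Tendsto (fun ε : ℝ => x + -ε) (𝓝 0) (𝓝 (x + -0)) :=
            (continuous_const.add continuous_neg).tendsto 0
          rw [neg_zero, add_zero] at hcont
          exact hcont.mono_left nhdsWithin_le_nhds
        · filter_upwards [hpos] with ε hε
          simp only [mem_compl_iff, mem_singleton_iff]
          intro h; nlinarith [add_right_cancel (a := x) (b := -ε) (c := 0)]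
      have h2 := (hslope.comp hmap).neg
      refine h2.congr' ?_
      filter_upwards [hpos] with ε hε
      simp only [Function.comp_apply, slope, vsub_eq_sub, add_sub_cancel_left,
        Complex.real_smul, Complex.ofReal_inv, Complex.ofReal_neg]
      rw [div_eq_mul_inv]
      ring
    have hinv_top : Tendsto (fun ε : ℝ => ε⁻¹) (𝓝[>] (0:ℝ)) atTop := tendsto_inv_nhdsGT_zero
    have hzero_lin : Tendsto (fun ε : ℝ => A x * ((ε : ℝ) : ℂ)) (𝓝[>] (0:ℝ)) (𝓝 0) := by
      have hcont : Tendsto (fun ε : ℝ => A x * ((ε : ℝ) : ℂ)) (𝓝 0) (𝓝 (A x * ((0:ℝ):ℂ))) :=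
        (continuous_const.mul Complex.continuous_ofReal).tendsto 0
      rw [Complex.ofReal_zero, mul_zero] at hcont
      exact hcont.mono_left nhdsWithin_le_nhds
    have hfar1 : ∀ᶠ ε in 𝓝[>] (0:ℝ), A (x + ε⁻¹) = 0 := by
      filter_upwards [hinv_top.eventually_ge_atTop (R + |x|)] with ε hε
      refine (hR.2 _ ?_).1
      have h1 := neg_abs_le x
      have : R ≤ x + ε⁻¹ := by linarith
      exact this.trans (le_abs_self _)
    have hfar2 : ∀ᶠ ε in 𝓝[>] (0:ℝ), A (x + -ε⁻¹) = 0 := by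
      filter_upwards [hinv_top.eventually_ge_atTop (R + |x|)] with ε hε
      refine (hR.2 _ ?_).1
      have h1 := le_abs_self x
      have : R ≤ -(x + -ε⁻¹) := by linarith
      calc R ≤ -(x + -ε⁻¹) := this
        _ ≤ |x + -ε⁻¹| := neg_le_abs _
    have hc1 : Tendsto (fun ε : ℝ => (A x - A (x + ε⁻¹)) / ((ε⁻¹ : ℝ) : ℂ)) (𝓝[>] (0:ℝ))
        (𝓝 0) := by
      refine hzero_lin.congr' ?_
      filter_upwards [hfar1, hpos] with ε h1 h2
      rw [h1, sub_zero, Complex.ofReal_inv, div_eq_mul_inv, inv_inv]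
    have hc2 : Tendsto (fun ε : ℝ => (A x - A (x + -ε⁻¹)) / ((-ε⁻¹ : ℝ) : ℂ)) (𝓝[>] (0:ℝ))
        (𝓝 0) := by
      have hzl2 : Tendsto (fun ε : ℝ => A x * (-((ε : ℝ) : ℂ))) (𝓝[>] (0:ℝ)) (𝓝 0) := by
        simpa using hzero_lin.neg.congr (fun ε => by ring)
      refine hzl2.congr' ?_
      filter_upwards [hfar2, hpos] with ε h1 h2
      rw [h1, sub_zero]
      push_cast
      rw [div_eq_mul_inv]
      congr 1
      rw [← inv_neg, inv_inv]
    have htot := ((hminus.sub hc2).add (hc1.sub hplus))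
    rw [hBdef]
    convert htot using 2
    ring
  -- conclusion
  have hgS : Tendsto (fun ε : ℝ => ∫ t in S ε, g t) (𝓝[>] (0:ℝ)) (𝓝 L) := by
    refine hg_lim.congr' ?_
    filter_upwards [hmem] with ε hε
    exact (hgG ε hε).symm
  refine ⟨L, ?_, ?_⟩
  · have htot : Tendsto (fun ε : ℝ => (∫ t in S ε, g t) + B ε) (𝓝[>] (0:ℝ)) (𝓝 (L + 0)) :=
      hgS.add hB0
    rw [add_zero] at htot
    show Tendsto (fun ε : ℝ => ∫ t in S ε, f t) (𝓝[>] (0:ℝ)) (𝓝 L)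
    refine htot.congr' ?_
    filter_upwards [hmem] with ε hε
    exact (hfg ε hε).symm
  · exact hgS
end

section
/- Let A, B : ℝ → ℂ be smooth and compactly supported. Then for each x, p.v. ∫_ℝ (A(x+t)−A(x))(B(x+t)−B(x))/t³ dt = (1/2) C_{1,B}(A')(x) + (1/2) C_{1,A}(B')(x), where C_{1,A}g(x) = p.v. ∫ g(x+t)(A(x+t)−A(x))/t² dt. -/
open MeasureTheory Filter

open Set
open scoped ContDiff


lemma pvset_eq {ε : ℝ} (hε : 0 < ε) :
    {t : ℝ | ε < |t| ∧ |t| < ε⁻¹} = Ioo (-ε⁻¹) (-ε) ∪ Ioo ε ε⁻¹ := by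
  have hinv : 0 < ε⁻¹ := by positivity
  ext t
  simp only [mem_setOf_eq, mem_union, mem_Ioo, lt_abs, abs_lt]
  constructor
  · rintro ⟨h1 | h1, h2, h3⟩
    · exact Or.inr ⟨h1, h3⟩
    · exact Or.inl ⟨h2, by linarith⟩
  · rintro (⟨h1, h2⟩ | ⟨h1, h2⟩)
    · exact ⟨Or.inr (by linarith), h1, by linarith⟩
    · exact ⟨Or.inl h1, by linarith, h2⟩

lemma setInt_eq (f : ℝ → ℂ) (hf : ∀ t : ℝ, t ≠ 0 → ContinuousAt f t) {ε : ℝ}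
    (hε : 0 < ε) (hε1 : ε < 1) :
    ∫ t in {t : ℝ | ε < |t| ∧ |t| < ε⁻¹}, f t
      = (∫ t in (-ε⁻¹)..(-ε), f t) + ∫ t in ε..ε⁻¹, f t := by
  have hinv : 1 < ε⁻¹ := one_lt_inv_iff₀.mpr ⟨hε, hε1⟩
  have hle : ε ≤ ε⁻¹ := by linarith
  have hle' : -ε⁻¹ ≤ -ε := by linarith
  have hc1 : ContinuousOn f (Icc (-ε⁻¹) (-ε)) := fun t ht =>
    (hf t (by rcases ht with ⟨_, h2⟩; intro h; rw [h] at h2; linarith)).continuousWithinAt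
  have hc2 : ContinuousOn f (Icc ε ε⁻¹) := fun t ht =>
    (hf t (by rcases ht with ⟨h1, _⟩; intro h; rw [h] at h1; linarith)).continuousWithinAt
  have hi1 : IntegrableOn f (Ioo (-ε⁻¹) (-ε)) :=
    (hc1.integrableOn_compact isCompact_Icc).mono_set Ioo_subset_Icc_self
  have hi2 : IntegrableOn f (Ioo ε ε⁻¹) :=
    (hc2.integrableOn_compact isCompact_Icc).mono_set Ioo_subset_Icc_self
  rw [pvset_eq hε, setIntegral_union ?_ measurableSet_Ioo hi1 hi2,
    intervalIntegral.integral_of_le hle', intervalIntegral.integral_of_le hle,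
    integral_Ioc_eq_integral_Ioo, integral_Ioc_eq_integral_Ioo]
  · rw [Set.disjoint_left]
    rintro a ⟨_, h2⟩ ⟨h3, _⟩
    linarith

-- second difference bound
lemma second_diff_bound (E : ℝ → ℂ) (hE : ContDiff ℝ ∞ E) (hEc : HasCompactSupport E)
    (x : ℝ) : ∃ K : ℝ, 0 ≤ K ∧ ∀ t : ℝ, 0 ≤ t →
      ‖E (x + t) + E (x - t) - 2 * E x‖ ≤ 2 * K * t ^ 2 := by
  obtain ⟨K, hK⟩ := ContDiff.lipschitzWith_of_hasCompactSupport hEc.deriv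
    ((contDiff_infty_iff_deriv.mp hE).2) (by simp)
  refine ⟨K, K.coe_nonneg, fun t ht => ?_⟩
  set u : ℝ → ℂ := fun s => E (x + s) + E (x - s) - 2 * E x with hu_def
  have hdE : Differentiable ℝ E := hE.differentiable (by simp)
  have hu : ∀ s : ℝ, HasDerivAt u (deriv E (x + s) - deriv E (x - s)) s := by
    intro s
    have h1 : HasDerivAt (fun s : ℝ => E (x + s)) (deriv E (x + s)) s :=
      (hdE (x + s)).hasDerivAt.comp_const_add x s
    have h2 : HasDerivAt (fun s : ℝ => E (x - s)) (-deriv E (x - s)) s :=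
      (hdE (x - s)).hasDerivAt.comp_const_sub x s
    simpa [hu_def, sub_eq_add_neg] using (h1.add h2).sub_const (2 * E x)
  have key : ‖u t - u 0‖ ≤ (2 * K * t) * ‖t - (0:ℝ)‖ := by
    apply Convex.norm_image_sub_le_of_norm_hasDerivWithin_le
      (f' := fun s => deriv E (x + s) - deriv E (x - s))
      (fun y _ => (hu y).hasDerivWithinAt) ?_ (convex_Icc 0 t)
      ⟨le_refl 0, ht⟩ ⟨ht, le_refl t⟩
    rintro y ⟨hy0, hyt⟩
    have := hK.dist_le_mul (x + y) (x - y)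
    rw [Complex.dist_eq] at this
    have hd : dist (x + y) (x - y) = 2 * y := by
      rw [Real.dist_eq]
      rw [abs_of_nonneg (by linarith)]
      ring
    rw [hd] at this
    calc ‖deriv E (x + y) - deriv E (x - y)‖ ≤ K * (2 * y) := this
      _ ≤ 2 * K * t := by nlinarith [K.coe_nonneg]
  have hu0 : u 0 = 0 := by simp [hu_def]; ring
  rw [hu0, sub_zero] at key
  calc ‖u t‖ ≤ (2 * K * t) * ‖t - (0:ℝ)‖ := key
    _ = 2 * K * t ^ 2 := by rw [sub_zero, Real.norm_eq_abs, abs_of_nonneg ht]; ring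

lemma pv_aux (D E : ℝ → ℂ) (hD : ContDiff ℝ ∞ D) (hDc : HasCompactSupport D)
    (hE : ContDiff ℝ ∞ E) (hEc : HasCompactSupport E) (x : ℝ) :
    ∃ L, HasPV (fun t => D (x + t) * (E (x + t) - E x) / t ^ 2) L := by
  classical
  set g : ℝ → ℂ := fun t => D (x + t) * (E (x + t) - E x) / t ^ 2 with hg_def
  set h : ℝ → ℂ := fun t => g t + g (-t) with hh_def
  have hDcont : Continuous D := hD.continuous
  have hEcont : Continuous E := hE.continuous
  have hgcont : ∀ t : ℝ, t ≠ 0 → ContinuousAt g t := by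
    intro t ht
    apply ContinuousAt.div
    · exact ((hDcont.comp (continuous_const.add continuous_id)).continuousAt).mul
        (((hEcont.comp (continuous_const.add continuous_id)).continuousAt).sub continuousAt_const)
    · exact ((Complex.continuous_ofReal.pow 2).continuousAt)
    · exact pow_ne_zero 2 (Complex.ofReal_ne_zero.mpr ht)
  have hhcont : ∀ t : ℝ, t ≠ 0 → ContinuousAt h t := by
    intro t ht
    exact (hgcont t ht).add ((hgcont (-t) (neg_ne_zero.mpr ht)).comp
      continuous_neg.continuousAt)
  obtain ⟨KD, hKD⟩ := ContDiff.lipschitzWith_of_hasCompactSupport hDc hD (by simp)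
  obtain ⟨KE, hKE⟩ := ContDiff.lipschitzWith_of_hasCompactSupport hEc hE (by simp)
  obtain ⟨CD, hCD⟩ := hDc.exists_bound_of_continuous hDcont
  have hCD0 : 0 ≤ CD := le_trans (norm_nonneg _) (hCD 0)
  obtain ⟨K2, hK20, hK2⟩ := second_diff_bound E hE hEc x
  set C : ℝ := 2*KD*KE + 2*CD*K2 with hC_def
  have hC0 : 0 ≤ C := by positivity
  -- uniform bound
  have hbound : ∀ t : ℝ, 0 < t → ‖h t‖ ≤ C := by
    intro t ht
    have e1 : x + -t = x - t := by ring
    have hht : h t = (D (x+t) * (E (x+t) - E x) + D (x-t) * (E (x-t) - E x)) / (t:ℂ)^2 := by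
      simp only [hh_def, hg_def, e1]
      have e2 : ((-t : ℝ) : ℂ)^2 = (t:ℂ)^2 := by push_cast; ring
      rw [e2, ← add_div]
    have hnum : D (x+t) * (E (x+t) - E x) + D (x-t) * (E (x-t) - E x)
        = (D (x+t) - D (x-t)) * (E (x+t) - E x) + D (x-t) * (E (x+t) + E (x-t) - 2*E x) := by
      ring
    rw [hht, hnum, norm_div]
    have hden : ‖(t:ℂ)^2‖ = t^2 := by
      rw [norm_pow, Complex.norm_real, Real.norm_eq_abs, sq_abs]
    rw [hden, div_le_iff₀ (by positivity)]
    have b1 : ‖D (x+t) - D (x-t)‖ ≤ KD * (2*t) := by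
      have := hKD.dist_le_mul (x+t) (x-t)
      rw [Complex.dist_eq, Real.dist_eq, show x + t - (x - t) = 2*t by ring,
        abs_of_nonneg (by linarith)] at this
      exact this
    have b2 : ‖E (x+t) - E x‖ ≤ KE * t := by
      have := hKE.dist_le_mul (x+t) x
      rw [Complex.dist_eq, Real.dist_eq, show x + t - x = t by ring,
        abs_of_nonneg ht.le] at this
      exact this
    have b3 := hK2 t ht.le
    calc ‖(D (x+t) - D (x-t)) * (E (x+t) - E x) + D (x-t) * (E (x+t) + E (x-t) - 2*E x)‖
        ≤ ‖(D (x+t) - D (x-t))‖ * ‖(E (x+t) - E x)‖ + ‖D (x-t)‖ * ‖E (x+t) + E (x-t) - 2*E x‖ := by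
          refine (norm_add_le _ _).trans ?_
          rw [norm_mul, norm_mul]
      _ ≤ (KD * (2*t)) * (KE * t) + CD * (2 * K2 * t^2) := by
          gcongr <;> first | exact b1 | exact b2 | exact hCD _ | exact b3
      _ = C * t^2 := by rw [hC_def]; ring
  -- support
  obtain ⟨R, hR⟩ := hDc.isBounded.subset_closedBall 0
  set M : ℝ := |R| + |x| + 1 with hM_def
  have hDzero : ∀ s : ℝ, |R| < |s - 0| → D s = 0 := by
    intro s hs
    apply image_eq_zero_of_notMem_tsupport
    intro hmem
    have := hR hmem
    rw [Metric.mem_closedBall, Real.dist_eq] at this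
    have : |s - 0| ≤ |R| := this.trans (le_abs_self R)
    linarith
  have hzero : ∀ t : ℝ, M ≤ t → h t = 0 := by
    intro t htM
    have ht0 : 0 < t := by
      have : (0:ℝ) ≤ |R| + |x| := by positivity
      linarith [hM_def ▸ htM]
    have h1 : D (x + t) = 0 := by
      apply hDzero
      rw [sub_zero]
      have : |x + t| ≥ t - |x| := by
        have := abs_add_le (-x) (x + t)
        rw [neg_add_cancel_left, abs_neg, abs_of_pos ht0] at this
        linarith [abs_nonneg x]
      have hM : |R| + 1 ≤ t - |x| := by
        simp only [hM_def] at htM; linarith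
      linarith
    have h2 : D (x + -t) = 0 := by
      apply hDzero
      rw [sub_zero]
      have : |x + -t| ≥ t - |x| := by
        have h' := abs_add_le (-x) (x + -t)
        rw [neg_add_cancel_left, abs_neg, abs_neg] at h'
        rw [abs_of_pos ht0] at h'
        linarith
      have hM : |R| + 1 ≤ t - |x| := by
        simp only [hM_def] at htM; linarith
      linarith
    simp [hh_def, hg_def, h1, h2]
  -- integrability machinery
  set bound : ℝ → ℝ := Set.indicator (Ioc 0 M) (fun _ => C) with hbound_def
  have hmeas : AEStronglyMeasurable h (volume.restrict (Ioi 0)) := by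
    have : ContinuousOn h (Ioi 0) := fun t ht => (hhcont t (ne_of_gt ht)).continuousWithinAt
    exact this.aestronglyMeasurable measurableSet_Ioi
  have hptbound : ∀ t ∈ Ioi (0:ℝ), ‖h t‖ ≤ bound t := by
    intro t ht
    by_cases htM : t ≤ M
    · have hmem : t ∈ Ioc 0 M := ⟨ht, htM⟩
      rw [hbound_def, Set.indicator_of_mem hmem]
      exact hbound t ht
    · rw [hbound_def, Set.indicator_of_notMem (fun hc => htM hc.2), hzero t (by linarith)]
      simp
  have hbint : Integrable bound (volume.restrict (Ioi 0)) := by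
    rw [hbound_def, integrable_indicator_iff measurableSet_Ioc]
    apply (integrableOn_const_iff (C := C)).mpr
    right
    calc (volume.restrict (Ioi 0)) (Ioc 0 M) ≤ volume (Ioc 0 M) :=
        Measure.restrict_le_self _
      _ < ⊤ := measure_Ioc_lt_top
  have hlim : ∀ᵐ t ∂(volume.restrict (Ioi (0:ℝ))), Tendsto
      (fun ε : ℝ => Set.indicator (Ioo ε ε⁻¹) h t) (nhdsWithin (0:ℝ) (Ioi 0)) (nhds (h t)) := by
    refine (ae_restrict_iff' measurableSet_Ioi).mpr (Filter.Eventually.of_forall fun t ht => ?_)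
    have htpos : 0 < t := ht
    have htinv0 : 0 < t⁻¹ := by positivity
    have hIco : (0:ℝ) ∈ Ico (0:ℝ) (min t t⁻¹) := ⟨le_refl _, lt_min htpos htinv0⟩
    have hev : ∀ᶠ ε in nhdsWithin (0:ℝ) (Ioi 0),
        Set.indicator (Ioo ε ε⁻¹) h t = h t := by
      filter_upwards [Ioo_mem_nhdsGT_of_mem hIco] with ε hε
      rcases hε with ⟨hε0, hεlt⟩
      have hεt : ε < t := lt_of_lt_of_le hεlt (min_le_left _ _)
      have hεt' : ε < t⁻¹ := lt_of_lt_of_le hεlt (min_le_right _ _)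
      have htinv : t < ε⁻¹ := by
        rw [show t = (t⁻¹)⁻¹ by rw [inv_inv]]
        exact inv_strictAnti₀ hε0 hεt'
      have hmem : t ∈ Ioo ε ε⁻¹ := ⟨hεt, htinv⟩
      exact Set.indicator_of_mem hmem h
    exact Filter.Tendsto.congr' (hev.mono fun ε he => he.symm) tendsto_const_nhds
  have main := MeasureTheory.tendsto_integral_filter_of_dominated_convergence
    (μ := volume.restrict (Ioi (0:ℝ)))
    (F := fun (ε : ℝ) (t : ℝ) => Set.indicator (Ioo ε ε⁻¹) h t) (f := h)
    (l := nhdsWithin (0:ℝ) (Ioi 0)) bound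
    (Eventually.of_forall fun ε => hmeas.indicator measurableSet_Ioo)
    (Eventually.of_forall fun ε => (ae_restrict_iff' measurableSet_Ioi).mpr
      (Filter.Eventually.of_forall fun t ht =>
        (norm_indicator_le_norm_self h t).trans (hptbound t ht)))
    hbint
    hlim
  refine ⟨∫ t, h t ∂(volume.restrict (Ioi 0)), ?_⟩
  show Tendsto _ _ _
  apply Filter.Tendsto.congr' _ main
  filter_upwards [Ioo_mem_nhdsGT_of_mem (Set.mem_Ico.mpr ⟨le_refl _, one_pos⟩)]
    with ε hε
  rcases hε with ⟨hε0, hε1⟩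
  have hinv1 : 1 < ε⁻¹ := one_lt_inv_iff₀.mpr ⟨hε0, hε1⟩
  have hle : ε ≤ ε⁻¹ := by linarith
  have huIcc : uIcc ε ε⁻¹ = Icc ε ε⁻¹ := uIcc_of_le hle
  have hIccpos : ∀ t ∈ Icc ε ε⁻¹, t ≠ 0 := by
    rintro t ⟨h1, _⟩ rfl; linarith
  have hig : IntervalIntegrable g volume ε ε⁻¹ := by
    apply ContinuousOn.intervalIntegrable
    rw [huIcc]
    exact fun t ht => (hgcont t (hIccpos t ht)).continuousWithinAt
  have hig' : IntervalIntegrable (fun t => g (-t)) volume ε ε⁻¹ := by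
    apply ContinuousOn.intervalIntegrable
    rw [huIcc]
    intro t ht
    exact (ContinuousAt.comp (hgcont (-t) (neg_ne_zero.mpr (hIccpos t ht)))
      continuous_neg.continuousAt).continuousWithinAt
  calc ∫ t, Set.indicator (Ioo ε ε⁻¹) h t ∂(volume.restrict (Ioi 0))
      = ∫ t in Ioo ε ε⁻¹, h t := by
        rw [integral_indicator measurableSet_Ioo, Measure.restrict_restrict measurableSet_Ioo,
          show Ioo ε ε⁻¹ ∩ Ioi 0 = Ioo ε ε⁻¹ from inter_eq_left.mpr (fun t ht => lt_trans hε0 ht.1)]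
    _ = ∫ t in ε..ε⁻¹, h t := by
        rw [intervalIntegral.integral_of_le hle, integral_Ioc_eq_integral_Ioo]
    _ = (∫ t in ε..ε⁻¹, g (-t)) + ∫ t in ε..ε⁻¹, g t := by
        rw [← intervalIntegral.integral_add hig' hig]
        apply intervalIntegral.integral_congr
        intro t _
        simp only [hh_def]
        ring
    _ = (∫ t in (-ε⁻¹)..(-ε), g t) + ∫ t in ε..ε⁻¹, g t := by
        rw [intervalIntegral.integral_comp_neg]
    _ = ∫ t in {t : ℝ | ε < |t| ∧ |t| < ε⁻¹}, g t := (setInt_eq g hgcont hε0 hε1).symm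

theorem stmt8 (A B : ℝ → ℂ) (hA : ContDiff ℝ (⊤ : ℕ∞) A) (hAc : HasCompactSupport A)
    (hB : ContDiff ℝ (⊤ : ℕ∞) B) (hBc : HasCompactSupport B) (x : ℝ) :
    ∃ L L₁ L₂ : ℂ,
      -- `C_{2,A,B}1(x)`
      HasPV (fun t => (A (x + t) - A x) * (B (x + t) - B x) / t ^ 3) L ∧
      -- `C_{1,B}(A')(x)`
      HasPV (fun t => deriv A (x + t) * (B (x + t) - B x) / t ^ 2) L₁ ∧
      -- `C_{1,A}(B')(x)`
      HasPV (fun t => deriv B (x + t) * (A (x + t) - A x) / t ^ 2) L₂ ∧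
      L = (1/2 : ℂ) * L₁ + (1/2 : ℂ) * L₂ := by
  have hAinf : ContDiff ℝ ∞ A := hA.of_le (by simp)
  have hBinf : ContDiff ℝ ∞ B := hB.of_le (by simp)
  have hA' : ContDiff ℝ ∞ (deriv A) := (contDiff_infty_iff_deriv.mp hAinf).2
  have hB' : ContDiff ℝ ∞ (deriv B) := (contDiff_infty_iff_deriv.mp hBinf).2
  have hAd : Differentiable ℝ A := hAinf.differentiable (by simp)
  have hBd : Differentiable ℝ B := hBinf.differentiable (by simp)
  set f₀ : ℝ → ℂ := fun t => (A (x + t) - A x) * (B (x + t) - B x) / (t:ℂ) ^ 3 with hf₀_def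
  set g₁ : ℝ → ℂ := fun t => deriv A (x + t) * (B (x + t) - B x) / (t:ℂ) ^ 2 with hg₁_def
  set g₂ : ℝ → ℂ := fun t => deriv B (x + t) * (A (x + t) - A x) / (t:ℂ) ^ 2 with hg₂_def
  set F : ℝ → ℂ := fun s => (A (x + s) - A x) * (B (x + s) - B x) / (s:ℂ) ^ 2 with hF_def
  set F'f : ℝ → ℂ := fun t =>
    ((deriv A (x+t) * (B (x+t) - B x) + (A (x+t) - A x) * deriv B (x+t)) * (t:ℂ)^2
      - (A (x+t) - A x) * (B (x+t) - B x) * (2*(t:ℂ))) / ((t:ℂ)^2)^2 with hF'f_def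
  -- continuity helpers
  have cA : Continuous fun t : ℝ => A (x + t) :=
    hAinf.continuous.comp (continuous_const.add continuous_id)
  have cB : Continuous fun t : ℝ => B (x + t) :=
    hBinf.continuous.comp (continuous_const.add continuous_id)
  have cA' : Continuous fun t : ℝ => deriv A (x + t) :=
    hA'.continuous.comp (continuous_const.add continuous_id)
  have cB' : Continuous fun t : ℝ => deriv B (x + t) :=
    hB'.continuous.comp (continuous_const.add continuous_id)
  have cpow2 : Continuous fun t : ℝ => ((t:ℂ))^2 := Complex.continuous_ofReal.pow 2
  have cpow3 : Continuous fun t : ℝ => ((t:ℂ))^3 := Complex.continuous_ofReal.pow 3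
  have hc₀ : ∀ t : ℝ, t ≠ 0 → ContinuousAt f₀ t := fun t ht =>
    ContinuousAt.div ((cA.continuousAt.sub continuousAt_const).mul
      (cB.continuousAt.sub continuousAt_const)) cpow3.continuousAt
      (pow_ne_zero 3 (Complex.ofReal_ne_zero.mpr ht))
  have hcg₁ : ∀ t : ℝ, t ≠ 0 → ContinuousAt g₁ t := fun t ht =>
    ContinuousAt.div (cA'.continuousAt.mul (cB.continuousAt.sub continuousAt_const))
      cpow2.continuousAt (pow_ne_zero 2 (Complex.ofReal_ne_zero.mpr ht))
  have hcg₂ : ∀ t : ℝ, t ≠ 0 → ContinuousAt g₂ t := fun t ht =>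
    ContinuousAt.div (cB'.continuousAt.mul (cA.continuousAt.sub continuousAt_const))
      cpow2.continuousAt (pow_ne_zero 2 (Complex.ofReal_ne_zero.mpr ht))
  have hcF' : ∀ t : ℝ, t ≠ 0 → ContinuousAt F'f t := fun t ht =>
    ContinuousAt.div (((cA'.continuousAt.mul (cB.continuousAt.sub continuousAt_const)).add
        ((cA.continuousAt.sub continuousAt_const).mul cB'.continuousAt)).mul cpow2.continuousAt
        |>.sub (((cA.continuousAt.sub continuousAt_const).mul
          (cB.continuousAt.sub continuousAt_const)).mul
          (continuousAt_const.mul Complex.continuous_ofReal.continuousAt)))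
      (cpow2.continuousAt.pow 2)
      (pow_ne_zero 2 (pow_ne_zero 2 (Complex.ofReal_ne_zero.mpr ht)))
  -- derivative of F away from 0
  have hF' : ∀ t : ℝ, t ≠ 0 → HasDerivAt F (F'f t) t := by
    intro t ht
    have h1 : HasDerivAt (fun s : ℝ => A (x + s) - A x) (deriv A (x+t)) t :=
      ((hAd (x+t)).hasDerivAt.comp_const_add x t).sub_const (A x)
    have h2 : HasDerivAt (fun s : ℝ => B (x + s) - B x) (deriv B (x+t)) t :=
      ((hBd (x+t)).hasDerivAt.comp_const_add x t).sub_const (B x)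
    have hnum : HasDerivAt (fun s : ℝ => (A (x + s) - A x) * (B (x + s) - B x))
        (deriv A (x+t) * (B (x+t) - B x) + (A (x+t) - A x) * deriv B (x+t)) t := h1.mul h2
    have hden : HasDerivAt (fun s : ℝ => ((s:ℂ))^2) (2*(t:ℂ)) t := by
      have hid : HasDerivAt (fun s : ℝ => (s:ℂ)) 1 t := by
        simpa using (hasDerivAt_id t).ofReal_comp
      simpa using (hasDerivAt_pow 2 (t:ℂ)).comp_ofReal
    have hdiv := hnum.div hden (pow_ne_zero 2 (Complex.ofReal_ne_zero.mpr ht))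
    rw [hF_def, hF'f_def]
    exact hdiv
  -- pointwise algebraic identity
  have hptid : ∀ t : ℝ, t ≠ 0 →
      f₀ t = (1/2:ℂ) * g₁ t + (1/2:ℂ) * g₂ t - (1/2:ℂ) * F'f t := by
    intro t ht
    have htc : (t:ℂ) ≠ 0 := Complex.ofReal_ne_zero.mpr ht
    rw [hf₀_def, hg₁_def, hg₂_def, hF'f_def]
    field_simp
    ring
  -- FTC on an interval avoiding 0
  have key_interval : ∀ a b : ℝ, (0:ℝ) ∉ Set.uIcc a b →
      ∫ t in a..b, f₀ t = (1/2:ℂ) * (∫ t in a..b, g₁ t) + (1/2:ℂ) * (∫ t in a..b, g₂ t)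
        - (1/2:ℂ) * (F b - F a) := by
    intro a b hab
    have hne : ∀ t ∈ Set.uIcc a b, t ≠ 0 := fun t ht h0 => hab (h0 ▸ ht)
    have hint1 : IntervalIntegrable g₁ volume a b :=
      ContinuousOn.intervalIntegrable (fun t ht => (hcg₁ t (hne t ht)).continuousWithinAt)
    have hint2 : IntervalIntegrable g₂ volume a b :=
      ContinuousOn.intervalIntegrable (fun t ht => (hcg₂ t (hne t ht)).continuousWithinAt)
    have hintF : IntervalIntegrable F'f volume a b :=
      ContinuousOn.intervalIntegrable (fun t ht => (hcF' t (hne t ht)).continuousWithinAt)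
    have hFTC : ∫ t in a..b, F'f t = F b - F a :=
      intervalIntegral.integral_eq_sub_of_hasDerivAt (fun t ht => hF' t (hne t ht)) hintF
    calc ∫ t in a..b, f₀ t
        = ∫ t in a..b, ((1/2:ℂ) * g₁ t + (1/2:ℂ) * g₂ t - (1/2:ℂ) * F'f t) :=
          intervalIntegral.integral_congr (fun t ht => hptid t (hne t ht))
      _ = (1/2:ℂ) * (∫ t in a..b, g₁ t) + (1/2:ℂ) * (∫ t in a..b, g₂ t)
            - (1/2:ℂ) * (∫ t in a..b, F'f t) := by
          rw [intervalIntegral.integral_sub ((hint1.const_mul _).add (hint2.const_mul _))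
            (hintF.const_mul _), intervalIntegral.integral_add (hint1.const_mul _)
            (hint2.const_mul _), intervalIntegral.integral_const_mul,
            intervalIntegral.integral_const_mul, intervalIntegral.integral_const_mul]
      _ = _ := by rw [hFTC]
  -- limit of F at 0 from both sides
  set c : ℂ := deriv A x * deriv B x with hc_def
  have hslope : Tendsto F (nhdsWithin (0:ℝ) {0}ᶜ) (nhds c) := by
    have ha : HasDerivAt (fun t : ℝ => A (x + t)) (deriv A x) 0 := by
      simpa using (hAd (x + 0)).hasDerivAt.comp_const_add x 0
    have hb : HasDerivAt (fun t : ℝ => B (x + t)) (deriv B x) 0 := by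
      simpa using (hBd (x + 0)).hasDerivAt.comp_const_add x 0
    have hsa := hasDerivAt_iff_tendsto_slope.mp ha
    have hsb := hasDerivAt_iff_tendsto_slope.mp hb
    apply Filter.Tendsto.congr' _ (hsa.mul hsb)
    filter_upwards [self_mem_nhdsWithin] with t ht
    have ht0 : t ≠ 0 := ht
    have htc : (t:ℂ) ≠ 0 := Complex.ofReal_ne_zero.mpr ht0
    simp only [slope, vsub_eq_sub, sub_zero, add_zero, Complex.real_smul, Complex.ofReal_inv,
      hF_def]
    field_simp
    try ring
    try simp
  have hb2 : Tendsto (fun ε : ℝ => F ε) (nhdsWithin 0 (Set.Ioi 0)) (nhds c) :=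
    hslope.mono_left (nhdsWithin_mono 0 (fun t ht => ne_of_gt ht))
  have hneg : Tendsto (fun ε : ℝ => -ε) (nhdsWithin (0:ℝ) (Set.Ioi 0))
      (nhdsWithin (0:ℝ) {0}ᶜ) := by
    apply tendsto_nhdsWithin_of_tendsto_nhds_of_eventually_within
    · simpa using (continuous_neg.tendsto (0:ℝ)).mono_left nhdsWithin_le_nhds
    · filter_upwards [self_mem_nhdsWithin] with ε hε
      exact neg_ne_zero.mpr (ne_of_gt hε)
  have hb3 : Tendsto (fun ε : ℝ => F (-ε)) (nhdsWithin 0 (Set.Ioi 0)) (nhds c) :=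
    hslope.comp hneg
  -- decay of F at infinity
  obtain ⟨CA, hCA⟩ := hAc.exists_bound_of_continuous hAinf.continuous
  obtain ⟨CB, hCB⟩ := hBc.exists_bound_of_continuous hBinf.continuous
  have hCA0 : 0 ≤ CA := le_trans (norm_nonneg _) (hCA 0)
  have hCB0 : 0 ≤ CB := le_trans (norm_nonneg _) (hCB 0)
  set Cnum : ℝ := (CA + ‖A x‖) * (CB + ‖B x‖) with hCnum_def
  have hFdecay : ∀ s : ℝ, s ≠ 0 → ‖F s‖ ≤ Cnum / s^2 := by
    intro s hs
    have hnum : ‖(A (x+s) - A x) * (B (x+s) - B x)‖ ≤ Cnum := by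
      calc ‖(A (x+s) - A x) * (B (x+s) - B x)‖ ≤ ‖A (x+s) - A x‖ * ‖B (x+s) - B x‖ :=
            norm_mul_le _ _
        _ ≤ Cnum := by
            rw [hCnum_def]
            exact mul_le_mul ((norm_sub_le _ _).trans (add_le_add (hCA _) le_rfl))
              ((norm_sub_le _ _).trans (add_le_add (hCB _) le_rfl)) (norm_nonneg _)
              (by positivity)
    calc ‖F s‖ = ‖(A (x+s) - A x) * (B (x+s) - B x)‖ / s^2 := by
          rw [hF_def, norm_div, norm_pow, Complex.norm_real, Real.norm_eq_abs, sq_abs]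
      _ ≤ Cnum / s^2 := by gcongr
  have hb1 : Tendsto (fun ε : ℝ => F ε⁻¹) (nhdsWithin 0 (Set.Ioi 0)) (nhds (0:ℂ)) := by
    apply squeeze_zero_norm' (a := fun ε : ℝ => Cnum * ε^2)
    · filter_upwards [self_mem_nhdsWithin] with ε hε
      have hε0 : (0:ℝ) < ε := hε
      calc ‖F ε⁻¹‖ ≤ Cnum / (ε⁻¹)^2 := hFdecay ε⁻¹ (ne_of_gt (inv_pos.mpr hε0))
        _ = Cnum * ε^2 := by field_simp
    · have h0 : Tendsto (fun ε : ℝ => Cnum * ε^2) (nhds 0) (nhds (Cnum * 0^2)) :=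
        (continuous_const.mul (continuous_pow 2)).tendsto 0
      simpa using h0.mono_left nhdsWithin_le_nhds
  have hb4 : Tendsto (fun ε : ℝ => F (-ε⁻¹)) (nhdsWithin 0 (Set.Ioi 0)) (nhds (0:ℂ)) := by
    apply squeeze_zero_norm' (a := fun ε : ℝ => Cnum * ε^2)
    · filter_upwards [self_mem_nhdsWithin] with ε hε
      have hε0 : (0:ℝ) < ε := hε
      calc ‖F (-ε⁻¹)‖ ≤ Cnum / (-ε⁻¹)^2 :=
            hFdecay (-ε⁻¹) (neg_ne_zero.mpr (ne_of_gt (inv_pos.mpr hε0)))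
        _ = Cnum * ε^2 := by rw [neg_sq]; field_simp
    · have h0 : Tendsto (fun ε : ℝ => Cnum * ε^2) (nhds 0) (nhds (Cnum * 0^2)) :=
        (continuous_const.mul (continuous_pow 2)).tendsto 0
      simpa using h0.mono_left nhdsWithin_le_nhds
  obtain ⟨L₁, hL₁⟩ := pv_aux (deriv A) B hA' hAc.deriv hBinf hBc x
  obtain ⟨L₂, hL₂⟩ := pv_aux (deriv B) A hB' hBc.deriv hAinf hAc x
  refine ⟨(1/2:ℂ)*L₁ + (1/2:ℂ)*L₂, L₁, L₂, ?_, hL₁, hL₂, rfl⟩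
  have hT₁ : Tendsto (fun ε : ℝ => ∫ t in {t : ℝ | ε < |t| ∧ |t| < ε⁻¹}, g₁ t)
      (nhdsWithin 0 (Set.Ioi 0)) (nhds L₁) := hL₁
  have hT₂ : Tendsto (fun ε : ℝ => ∫ t in {t : ℝ | ε < |t| ∧ |t| < ε⁻¹}, g₂ t)
      (nhdsWithin 0 (Set.Ioi 0)) (nhds L₂) := hL₂
  have hmain := ((hT₁.const_mul (1/2:ℂ)).add (hT₂.const_mul (1/2:ℂ))).sub
    (((hb1.sub hb2).add (hb3.sub hb4)).const_mul (1/2:ℂ))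
  have hval : ((1/2:ℂ)*L₁ + (1/2:ℂ)*L₂) - (1/2:ℂ)*(((0:ℂ) - c) + (c - (0:ℂ)))
      = (1/2:ℂ)*L₁ + (1/2:ℂ)*L₂ := by ring
  rw [hval] at hmain
  show Tendsto _ _ _
  apply Filter.Tendsto.congr' _ hmain
  filter_upwards [Ioo_mem_nhdsGT_of_mem (Set.mem_Ico.mpr ⟨le_refl (0:ℝ), one_pos⟩)] with ε hε
  obtain ⟨hε0, hε1⟩ := hε
  have hinv1 : 1 < ε⁻¹ := one_lt_inv_iff₀.mpr ⟨hε0, hε1⟩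
  have hnotpos : (0:ℝ) ∉ Set.uIcc ε ε⁻¹ := by
    rw [Set.uIcc_of_le (by linarith)]
    intro h
    rw [Set.mem_Icc] at h
    linarith [h.1, h.2]
  have hnotneg : (0:ℝ) ∉ Set.uIcc (-ε⁻¹) (-ε) := by
    rw [Set.uIcc_of_le (by linarith)]
    intro h
    rw [Set.mem_Icc] at h
    linarith [h.1, h.2]
  rw [setInt_eq f₀ hc₀ hε0 hε1, setInt_eq g₁ hcg₁ hε0 hε1, setInt_eq g₂ hcg₂ hε0 hε1,
    key_interval _ _ hnotneg, key_interval _ _ hnotpos]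
  ring
end

section
/- Define m_d(ξ, ξ₁, …, ξ_d) = ∫_{[0,1]^d} sgn(ξ + α₁ξ₁ + ⋯ + α_dξ_d) dα₁⋯dα_d. Then for every (ξ, ξ₁, …, ξ_d) with ξ₁ ≠ 0, m_d(ξ, ξ₁, …, ξ_d) = (1/ξ₁) ∫_0^{ξ₁} ∫_{[0,1]^{d−1}} sgn(ξ + α + α₂ξ₂ + ⋯ + α_dξ_d) dα₂⋯dα_d dα, and its partial derivative with respect to ξ₁ (where it exists) equals (1/ξ₁)[ m_{d−1}(ξ+ξ₁, ξ₂, …, ξ_d) − m_d(ξ, ξ₁, …, ξ_d) ]. -/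
/-!
Integrating out the first variable by Fubini, the substitution `α = α₁ ξ₁` turns `m_{d+1}` into
the average `ξ₁⁻¹ ∫₀^{ξ₁} m_d(ξ + α, ξ₂, …)`. The integrand is monotone in `α` (since `sgn` is), hence
locally integrable, so the fundamental theorem of calculus differentiates the average at every
point of continuity.
-/

open MeasureTheory

/-- The symbol of the `n`-th Calderón commutator:
`m_n(ξ, v) = ∫_{[0,1]^n} sgn(ξ + Σᵢ αᵢ vᵢ) dα`. -/
noncomputable def mSym (n : ℕ) (ξ : ℝ) (v : Fin n → ℝ) : ℝ :=
  ∫ α in Set.univ.pi (fun _ : Fin n => Set.Icc (0:ℝ) 1),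
    Real.sign (ξ + ∑ i, α i * v i)

open Set

lemma Real.monotone_sign : Monotone Real.sign := by
  intro a b hab
  unfold Real.sign
  split_ifs <;> linarith

lemma Real.integrable_sign_comp {α : Type*} [MeasurableSpace α] {μ : Measure α}
    [IsFiniteMeasure μ] {f : α → ℝ} (hf : Measurable f) :
    Integrable (fun x => Real.sign (f x)) μ := by
  refine .of_bound (Real.monotone_sign.measurable.comp hf).aestronglyMeasurable 1 ?_
  filter_upwards with x
  rcases Real.sign_apply_eq (f x) with h | h | h <;> simp [h]

lemma mSym_eq_integral_pi (n : ℕ) (ξ : ℝ) (v : Fin n → ℝ) :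
    mSym n ξ v = ∫ α, Real.sign (ξ + ∑ i, α i * v i)
      ∂Measure.pi fun _ => volume.restrict (Icc (0:ℝ) 1) := by
  rw [mSym, volume_pi, Measure.restrict_pi_pi]

lemma monotone_mSym (n : ℕ) (v : Fin n → ℝ) : Monotone fun ξ => mSym n ξ v := by
  intro a b hab
  simp only [mSym_eq_integral_pi]
  exact integral_mono (Real.integrable_sign_comp (by fun_prop))
    (Real.integrable_sign_comp (by fun_prop)) fun α => Real.monotone_sign (by linarith)

lemma mSym_succ (n : ℕ) (ξ : ℝ) (v : Fin (n + 1) → ℝ) :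
    mSym (n + 1) ξ v = ∫ t in Icc 0 1, mSym n (ξ + t * v 0) (Fin.tail v) := by
  let μ : Fin (n + 1) → Measure ℝ := fun _ => volume.restrict (Icc 0 1)
  have he := (measurePreserving_piFinSuccAbove μ 0).symm
  rw [mSym_eq_integral_pi, ← he.integral_comp', integral_prod]
  · simp only [mSym_eq_integral_pi]
    congr with t
    congr with α
    simp [Fin.sum_univ_succ, add_assoc, Fin.tail]
  · exact Real.integrable_sign_comp (by fun_prop)

lemma mSym_cons (n : ℕ) (ξ : ℝ) {u : ℝ} (hu : u ≠ 0) (rest : Fin n → ℝ) :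
    mSym (n + 1) ξ (Fin.cons u rest) = u⁻¹ * ∫ α in 0..u, mSym n (ξ + α) rest := by
  rw [mSym_succ, integral_Icc_eq_integral_Ioc, ← intervalIntegral.integral_of_le zero_le_one]
  simpa using intervalIntegral.integral_comp_mul_right (fun α => mSym n (ξ + α) rest) hu
    (a := 0) (b := 1)

theorem hasDerivAt_inv_mul_integral {g : ℝ → ℝ} (hg : LocallyIntegrable g) {x : ℝ}
    (hx : x ≠ 0) (hgx : ContinuousAt g x) :
    HasDerivAt (fun u => u⁻¹ * ∫ t in 0..u, g t)
      (x⁻¹ * (g x - x⁻¹ * ∫ t in 0..x, g t)) x := by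
  have hint : HasDerivAt (fun u => ∫ t in 0..u, g t) (g x) x :=
    intervalIntegral.integral_hasDerivAt_right
      (hg.integrableOn_isCompact isCompact_uIcc).intervalIntegrable
      hg.aestronglyMeasurable.stronglyMeasurableAtFilter hgx
  exact ((hasDerivAt_inv hx).mul hint).congr_deriv (by ring)

theorem stmt11 (d : ℕ) (ξ ξ₁ : ℝ) (hξ₁ : ξ₁ ≠ 0) (rest : Fin d → ℝ)
    (hcont : ContinuousAt (fun α : ℝ => mSym d (ξ + α) rest) ξ₁) :
    mSym (d+1) ξ (Fin.cons ξ₁ rest) =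
      (1 / ξ₁) * ∫ α in (0:ℝ)..ξ₁, mSym d (ξ + α) rest ∧
    HasDerivAt (fun u : ℝ => mSym (d+1) ξ (Fin.cons u rest))
      ((1 / ξ₁) *
        (mSym d (ξ + ξ₁) rest - mSym (d+1) ξ (Fin.cons ξ₁ rest))) ξ₁ := by
  have hmono : Monotone fun α => mSym d (ξ + α) rest :=
    (monotone_mSym d rest).comp fun a b hab => add_le_add_right hab ξ
  have hcons : ∀ᶠ u in nhds ξ₁, mSym (d + 1) ξ (Fin.cons u rest)
      = u⁻¹ * ∫ α in 0..u, mSym d (ξ + α) rest :=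
    Filter.eventually_of_mem (isOpen_ne.mem_nhds hξ₁) fun u hu => mSym_cons d ξ hu rest
  rw [one_div, hcons.self_of_nhds]
  exact ⟨rfl, (hasDerivAt_inv_mul_integral hmono.locallyIntegrable hξ₁ hcont).congr_of_eventuallyEq
    hcons⟩
end
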